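/- arXiv:2110.01189 — 6 statements merged into one kernel-verified Lean document; each statement's English description precedes it below -/
import Mathlib

section
/- Suppose δ_{1,t} · n†_eff ≤ c₁ · κ†_t for a constant c₁ > 0, and let z > 0. If τ > 0 satisfies the population tuning equation Σ_{s=t}^{t+m} E[ min( w_{s,t}² (X_s² − σ_t²)², τ² ) ] = z·τ², then τ ≤ √( (1 + c₁)·κ†_t / (n†_eff · z) ). -/
open MeasureTheory ProbabilityTheory Finset

/-! Truncating at `τ²` only decreases each summand of the tuning equation, and the decomposition
`E[(X_s² − σ_t²)²] = κ_s + (σ_s² − σ_t²)²` of the second moment about `σ_t²` turns the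
untruncated sum into `S κ†_t + δ_{1,t}` with `S = Σ_s w_{s,t}² = 1 / n†_eff`. The smoothness
assumption bounds this by `(1 + c₁) S κ†_t`, so `z τ² ≤ (1 + c₁) κ†_t / n†_eff`. -/

section Moments

variable {Ω : Type*} [MeasurableSpace Ω] {μ : Measure Ω}

lemma memLp_two_sq_of_integrable_pow_four {X : Ω → ℝ} (hX : AEStronglyMeasurable X μ)
    (h4 : Integrable (fun ω => X ω ^ 4) μ) : MemLp (fun ω => X ω ^ 2) 2 μ :=
  (memLp_two_iff_integrable_sq (f := fun ω => X ω ^ 2) (hX.pow 2)).2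
    (by simpa only [← pow_mul] using h4)

lemma integral_sub_const_sq_eq_variance_add [IsProbabilityMeasure μ] {Y : Ω → ℝ}
    (hY : MemLp Y 2 μ) (c : ℝ) :
    ∫ ω, (Y ω - c) ^ 2 ∂μ = Var[Y; μ] + (μ[Y] - c) ^ 2 := by
  have h := variance_eq_sub (X := fun ω => Y ω - c) (hY.sub (memLp_const c))
  rw [variance_sub_const hY.aestronglyMeasurable, integral_sub (hY.integrable one_le_two)
    (integrable_const c), integral_const] at h
  simp only [Pi.pow_apply, probReal_univ, smul_eq_mul, one_mul] at h
  linarith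

lemma integral_min_le_integral {f : Ω → ℝ} (hf : Integrable f μ) (hf0 : 0 ≤ f) {b : ℝ}
    (hb : 0 ≤ b) : ∫ ω, min (f ω) b ∂μ ≤ ∫ ω, f ω ∂μ :=
  integral_mono_of_nonneg (.of_forall fun ω => le_min (hf0 ω) hb) hf
    (.of_forall fun _ => min_le_left _ _)

end Moments

lemma le_sqrt_of_mul_sq_le_add {S κ δ c z τ : ℝ} (hS : 0 < S) (hsmooth : δ * (1 / S) ≤ c * κ)
    (hz : 0 < z) (h : z * τ ^ 2 ≤ κ * S + δ) : τ ≤ √((1 + c) * κ / (1 / S * z)) := by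
  have hδ : δ ≤ c * κ * S := by rwa [mul_one_div, div_le_iff₀ hS] at hsmooth
  refine (le_abs_self τ).trans (Real.abs_le_sqrt ?_)
  rw [one_div_mul_eq_div, div_div_eq_mul_div, le_div_iff₀ hz]
  linarith

theorem population_tau_upper_bound_general
    {Ω : Type*} [MeasurableSpace Ω] (μ : Measure Ω) [IsProbabilityMeasure μ]
    (X : ℤ → Ω → ℝ) (σ κ : ℤ → ℝ)
    (hXmeas : ∀ s, Measurable (X s))
    (hvar : ∀ s, ∫ ω, (X s ω) ^ 2 ∂μ = (σ s) ^ 2)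
    (hκ : ∀ s, ∫ ω, ((X s ω) ^ 2 - (σ s) ^ 2) ^ 2 ∂μ = κ s)
    (hX4int : ∀ s, Integrable (fun ω => (X s ω) ^ 4) μ)
    (t : ℤ) (m : ℕ) (lam : ℝ) (hlam : lam ∈ Set.Ioo (0 : ℝ) 1)
    (w : ℕ → ℝ) (hw : ∀ i, w i = lam ^ i / ∑ j ∈ Finset.range (m + 1), lam ^ j)
    (neff κdag δ1 : ℝ)
    (hneff : neff = 1 / ∑ i ∈ Finset.range (m + 1), (w i) ^ 2)
    (hκdag : κdag = (∑ i ∈ Finset.range (m + 1), (w i) ^ 2 * κ (t + i)) /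
      ∑ i ∈ Finset.range (m + 1), (w i) ^ 2)
    (hδ1 : δ1 = ∑ i ∈ Finset.range (m + 1), (w i) ^ 2 * ((σ (t + i)) ^ 2 - (σ t) ^ 2) ^ 2)
    (c₁ : ℝ)
    (hsmooth : δ1 * neff ≤ c₁ * κdag)
    (z τ : ℝ) (hz : 0 < z)
    (htuning : ∑ i ∈ Finset.range (m + 1),
        ∫ ω, min ((w i) ^ 2 * ((X (t + i) ω) ^ 2 - (σ t) ^ 2) ^ 2) (τ ^ 2) ∂μ = z * τ ^ 2) :
    τ ≤ Real.sqrt ((1 + c₁) * κdag / (neff * z)) := by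
  set S := ∑ i ∈ range (m + 1), w i ^ 2
  have hS : 0 < S := by
    obtain ⟨hlam0, -⟩ := hlam
    exact sum_pos (fun i _ => by rw [hw]; positivity) ⟨0, by simp⟩
  have hL2 s := memLp_two_sq_of_integrable_pow_four (hXmeas s).aestronglyMeasurable (hX4int s)
  have hmoment s c : ∫ ω, (X s ω ^ 2 - c) ^ 2 ∂μ = κ s + (σ s ^ 2 - c) ^ 2 := by
    rw [integral_sub_const_sq_eq_variance_add (hL2 s), variance_eq_integral (hL2 s).aemeasurable,
      hvar, hκ]
  have hbound : z * τ ^ 2 ≤ κdag * S + δ1 := by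
    calc z * τ ^ 2
        = ∑ i ∈ range (m + 1),
            ∫ ω, min (w i ^ 2 * (X (t + i) ω ^ 2 - σ t ^ 2) ^ 2) (τ ^ 2) ∂μ := htuning.symm
      _ ≤ ∑ i ∈ range (m + 1), w i ^ 2 * ∫ ω, (X (t + i) ω ^ 2 - σ t ^ 2) ^ 2 ∂μ :=
          sum_le_sum fun i _ => by
            rw [← integral_const_mul]
            exact integral_min_le_integral
              (((hL2 _).sub (memLp_const _)).integrable_sq.const_mul _)
              (fun ω => by positivity) (sq_nonneg τ)
      _ = κdag * S + δ1 := by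
          simp only [hmoment, mul_add, sum_add_distrib, hκdag, hδ1, div_mul_cancel₀ _ hS.ne']
  rw [hneff] at hsmooth ⊢
  exact le_sqrt_of_mul_sq_le_add hS hsmooth hz hbound

/-- Upper bound on the population robustification parameter (proof of Theorem 2):
if `δ₁ₜ n† ≤ c₁ κ†ₜ` and `τ` solves the population tuning equation
`Σₛ E[min(w² (Xₛ² − σₜ²)², τ²)] = z τ²`, then `τ ≤ √((1+c₁) κ†ₜ/(n† z))`. -/
theorem population_tau_upper_bound
    {Ω : Type*} [MeasurableSpace Ω] (μ : Measure Ω) [IsProbabilityMeasure μ]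
    (X : ℤ → Ω → ℝ) (σ κ : ℤ → ℝ)
    (hXmeas : ∀ s, Measurable (X s))
    (hindep : iIndepFun X μ)
    (hmean : ∀ s, ∫ ω, X s ω ∂μ = 0)
    (hvar : ∀ s, ∫ ω, (X s ω) ^ 2 ∂μ = (σ s) ^ 2)
    (hσpos : ∀ s, 0 < σ s)
    (hκ : ∀ s, ∫ ω, ((X s ω) ^ 2 - (σ s) ^ 2) ^ 2 ∂μ = κ s)
    (hX4int : ∀ s, Integrable (fun ω => (X s ω) ^ 4) μ)
    (t : ℤ) (m : ℕ) (lam : ℝ) (hlam : lam ∈ Set.Ioo (0 : ℝ) 1)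
    (w : ℕ → ℝ) (hw : ∀ i, w i = lam ^ i / ∑ j ∈ Finset.range (m + 1), lam ^ j)
    (neff κdag δ1 : ℝ)
    (hneff : neff = 1 / ∑ i ∈ Finset.range (m + 1), (w i) ^ 2)
    (hκdag : κdag = (∑ i ∈ Finset.range (m + 1), (w i) ^ 2 * κ (t + i)) /
      ∑ i ∈ Finset.range (m + 1), (w i) ^ 2)
    (hδ1 : δ1 = ∑ i ∈ Finset.range (m + 1), (w i) ^ 2 * ((σ (t + i)) ^ 2 - (σ t) ^ 2) ^ 2)
    (c₁ : ℝ) (hc₁ : 0 < c₁)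
    (hsmooth : δ1 * neff ≤ c₁ * κdag)
    (z τ : ℝ) (hz : 0 < z) (hτpos : 0 < τ)
    (htuning : ∑ i ∈ Finset.range (m + 1),
        ∫ ω, min ((w i) ^ 2 * ((X (t + i) ω) ^ 2 - (σ t) ^ 2) ^ 2) (τ ^ 2) ∂μ = z * τ ^ 2) :
    τ ≤ Real.sqrt ((1 + c₁) * κdag / (neff * z)) :=
  population_tau_upper_bound_general μ X σ κ hXmeas hvar hκ hX4int t m lam hlam w hw neff κdag δ1
    hneff hκdag hδ1 c₁ hsmooth z τ hz htuning
end

section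
/- (Lemma 2.) Let Θ ⊆ ℝ be an interval, α ∈ (0, 1/2), and let F : ℝ → ℝ be differentiable, α-strongly convex on Θ, and 1-smooth (i.e., F' is 1-Lipschitz). Let F̃ : ℝ → ℝ be differentiable. If θ* ∈ Θ is a minimizer of F and θ̃* ∈ Θ is a minimizer of F̃, then |θ̃* − θ*| ≤ ((α + 1)/α) · sup_{θ ∈ ℝ} | F̃'(θ) − F'(θ) |. -/
/-! Strong convexity of `F` on `Θ` makes `F' - α • id` monotone there, so `α |θ̃* − θ*|` is at
most `|F'(θ̃*) − F'(θ*)| = |F'(θ̃*) − F̃'(θ̃*)|`, both minimizers being critical points;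
hence even `|θ̃* − θ*| ≤ S / α`. -/

namespace StrongConvexOn

variable {s : Set ℝ} {m : ℝ} {f : ℝ → ℝ} {x y f'x f'y : ℝ}

theorem mul_sub_le_sub_of_hasDerivAt (hf : StrongConvexOn s m f) (hx : x ∈ s) (hy : y ∈ s)
    (hxy : x < y) (hfx : HasDerivAt f f'x x) (hfy : HasDerivAt f f'y y) :
    m * (y - x) ≤ f'y - f'x := by
  have hg : ConvexOn ℝ s fun z ↦ f z - m / 2 * z ^ 2 := by
    simpa only [Real.norm_eq_abs, sq_abs] using strongConvexOn_iff_convex.mp hf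
  have hg' : ∀ {z f'z}, HasDerivAt f f'z z →
      HasDerivAt (fun z ↦ f z - m / 2 * z ^ 2) (f'z - m * z) z := fun hfz ↦
    (hfz.sub ((hasDerivAt_pow 2 _).const_mul (m / 2))).congr_deriv (by ring)
  have := (hg.le_slope_of_hasDerivAt hx hy hxy (hg' hfx)).trans
    (hg.slope_le_of_hasDerivAt hx hy hxy (hg' hfy))
  linarith

theorem mul_abs_sub_le_abs_sub_of_hasDerivAt (hf : StrongConvexOn s m f) (hx : x ∈ s)
    (hy : y ∈ s) (hfx : HasDerivAt f f'x x) (hfy : HasDerivAt f f'y y) :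
    m * |y - x| ≤ |f'y - f'x| := by
  rcases lt_trichotomy x y with hxy | rfl | hyx
  · rw [abs_of_pos (sub_pos.2 hxy)]
    exact (hf.mul_sub_le_sub_of_hasDerivAt hx hy hxy hfx hfy).trans (le_abs_self _)
  · simp
  · rw [abs_sub_comm, abs_of_pos (sub_pos.2 hyx), abs_sub_comm]
    exact (hf.mul_sub_le_sub_of_hasDerivAt hy hx hyx hfy hfx).trans (le_abs_self _)

end StrongConvexOn

theorem minimizer_perturbation_bound_general
    (Θ : Set ℝ)
    (α : ℝ) (hα : α ∈ Set.Ioo (0 : ℝ) (1 / 2))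
    (F Ftil : ℝ → ℝ) (F' Ftil' : ℝ → ℝ)
    (hF : ∀ θ, HasDerivAt F (F' θ) θ)
    (hFtil : ∀ θ, HasDerivAt Ftil (Ftil' θ) θ)
    (hconv : StrongConvexOn Θ α F)
    (θstar θtil : ℝ) (hθ : θstar ∈ Θ) (hθtil : θtil ∈ Θ)
    (hmin : ∀ x : ℝ, F θstar ≤ F x)
    (hmintil : ∀ x : ℝ, Ftil θtil ≤ Ftil x)
    (S : ℝ) (hS : ∀ θ : ℝ, |Ftil' θ - F' θ| ≤ S) :
    |θtil - θstar| ≤ (α + 1) / α * S := by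
  have hcrit : F' θstar = 0 :=
    IsLocalMin.hasDerivAt_eq_zero (.of_forall hmin) (hF θstar)
  have hcrittil : Ftil' θtil = 0 :=
    IsLocalMin.hasDerivAt_eq_zero (.of_forall hmintil) (hFtil θtil)
  have hdist : α * |θtil - θstar| ≤ S := calc
    α * |θtil - θstar| ≤ |F' θtil - F' θstar| :=
      hconv.mul_abs_sub_le_abs_sub_of_hasDerivAt hθ hθtil (hF θstar) (hF θtil)
    _ = |Ftil' θtil - F' θtil| := by rw [hcrit, hcrittil, sub_zero, zero_sub, abs_neg]
    _ ≤ S := hS θtil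
  have hS0 : 0 ≤ S := (abs_nonneg _).trans (hS 0)
  calc |θtil - θstar| ≤ S / α := (le_div_iff₀' hα.1).2 hdist
    _ ≤ (α + 1) / α * S := by
      rw [div_mul_eq_mul_div]
      exact div_le_div_of_nonneg_right (by nlinarith [hα.1]) hα.1.le

/-- **Lemma 2.** If `F` is differentiable, `α`-strongly convex on an interval `Θ`
(`α ∈ (0, 1/2)`) and `1`-smooth (`F'` is `1`-Lipschitz), `F̃` is differentiable, and
`θ* ∈ Θ`, `θ̃* ∈ Θ` are minimizers of `F` and `F̃` respectively, then
`|θ̃* − θ*| ≤ ((α+1)/α) · sup_θ |F̃'(θ) − F'(θ)|`. -/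
theorem minimizer_perturbation_bound
    (Θ : Set ℝ) (hΘ : Convex ℝ Θ)
    (α : ℝ) (hα : α ∈ Set.Ioo (0 : ℝ) (1 / 2))
    (F Ftil : ℝ → ℝ) (F' Ftil' : ℝ → ℝ)
    (hF : ∀ θ, HasDerivAt F (F' θ) θ)
    (hFtil : ∀ θ, HasDerivAt Ftil (Ftil' θ) θ)
    (hconv : StrongConvexOn Θ α F)
    (hsmooth : LipschitzWith 1 F')
    (θstar θtil : ℝ) (hθ : θstar ∈ Θ) (hθtil : θtil ∈ Θ)
    (hmin : ∀ x : ℝ, F θstar ≤ F x)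
    (hmintil : ∀ x : ℝ, Ftil θtil ≤ Ftil x)
    (S : ℝ) (hS : ∀ θ : ℝ, |Ftil' θ - F' θ| ≤ S) :
    |θtil - θstar| ≤ (α + 1) / α * S :=
  minimizer_perturbation_bound_general Θ α hα F Ftil F' Ftil' hF hFtil hconv θstar θtil hθ hθtil
    hmin hmintil S hS
end

section
/- For every x ∈ ℝ, the Catoni-type influence function φ(x) = min(|x|, 1) · sgn(x) satisfies −log(1 − x + x²) ≤ φ(x) ≤ log(1 + x + x²). -/
lemma catoni_upper (x : ℝ) : min |x| 1 * Real.sign x ≤ Real.log (1 + x + x ^ 2) := by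
  have hq : (0:ℝ) < 1 + x + x ^ 2 := by nlinarith [sq_nonneg (x+1), sq_nonneg x]
  rcases le_or_gt |x| 1 with h | h
  · have hφ : min |x| 1 * Real.sign x = x := by
      rw [min_eq_left h]
      rcases lt_trichotomy x 0 with hx | hx | hx
      · rw [Real.sign_of_neg hx, abs_of_neg hx]; ring
      · simp [hx]
      · rw [Real.sign_of_pos hx, abs_of_pos hx]; ring
    rw [hφ, Real.le_log_iff_exp_le hq]
    have hb := Real.exp_bound h (n := 2) (by norm_num)
    have hsum : ∑ i ∈ Finset.range 2, x ^ i / (Nat.factorial i : ℝ) = 1 + x := by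
      simp [Finset.sum_range_succ, Nat.factorial]
    rw [hsum] at hb
    have := abs_le.1 hb
    have hx2 : |x| ^ 2 = x ^ 2 := sq_abs x
    rw [hx2] at this
    norm_num at this
    nlinarith [this.2, sq_nonneg x]
  · have hmin : min |x| 1 = 1 := min_eq_right h.le
    rcases lt_or_ge x 0 with hx | hx
    · have hs : Real.sign x = -1 := Real.sign_of_neg hx
      rw [hmin, hs, Real.le_log_iff_exp_le hq]
      have h1 : x < -1 := by
        rcases abs_cases x with ⟨h1, _⟩ | ⟨h1, _⟩ <;> linarith
      have he : Real.exp (1 * (-1)) < 1 := by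
        rw [Real.exp_lt_one_iff]; norm_num
      nlinarith
    · have hxpos : 0 < x := by
        rcases abs_cases x with ⟨h1, _⟩ | ⟨h1, _⟩ <;> linarith
      have hs : Real.sign x = 1 := Real.sign_of_pos hxpos
      rw [hmin, hs, Real.le_log_iff_exp_le hq]
      have h1 : 1 < x := by rwa [abs_of_pos hxpos] at h
      have he : Real.exp (1 * 1) < 2.7182818286 := by
        rw [one_mul]; exact Real.exp_one_lt_d9
      have h3 : Real.exp (1 * 1) < 3 := he.trans (by norm_num)
      nlinarith [sq_nonneg (x-1)]

/-- The Catoni-type influence function `φ(x) = min(|x|,1)·sgn(x)` satisfies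
`−log(1 − x + x²) ≤ φ(x) ≤ log(1 + x + x²)` for all real `x`. -/
theorem catoni_influence_bounds (x : ℝ) :
    -Real.log (1 - x + x ^ 2) ≤ min |x| 1 * Real.sign x ∧
      min |x| 1 * Real.sign x ≤ Real.log (1 + x + x ^ 2) := by
  constructor
  · have h := catoni_upper (-x)
    rw [abs_neg, Real.sign_neg, mul_neg] at h
    have hq : 1 + -x + (-x) ^ 2 = 1 - x + x ^ 2 := by ring
    rw [hq] at h
    linarith
  · exact catoni_upper x
end

section
/- Let X_t, X_{t+1}, …, X_{t+m} be independent real-valued random variables with E[X_s²] = σ_s² and E[(X_s² − σ_s²)²] = κ_s < ∞, let w_s ≥ 0 be weights and τ > 0, and define the weighted Huber score r(θ) = Σ_{s=t}^{t+m} min( w_s |X_s² − θ|, τ ) · sgn( X_s² − θ ). Then for every θ ∈ ℝ, E[ exp( r(θ)/τ ) ] ≤ exp( Σ_{s=t}^{t+m} [ w_s (σ_s² − θ)/τ + w_s² ( κ_s + (σ_s² − θ)² ) / τ² ] ), and likewise E[ exp( −r(θ)/τ ) ] ≤ exp( Σ_{s=t}^{t+m} [ −w_s (σ_s² − θ)/τ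 + w_s² ( κ_s + (σ_s² − θ)² ) / τ² ] ). -/
/-!
Each summand of `±r(θ)/τ` is Catoni's influence function `ψ(x) = min(|x|, 1) sgn x`
evaluated at `±wₛ(Xₛ² − θ)/τ`, and Catoni's inequality gives `exp ψ(x) ≤ 1 + x + x²`.
Taking expectations and using `1 + a ≤ exp a` bounds the moment generating function of one
summand by its first two moments; independence turns the expectation of the product of the
factors `exp ψ` into the product of their expectations.
-/

open MeasureTheory ProbabilityTheory Finset

noncomputable def catoniPsi (x : ℝ) : ℝ := min |x| 1 * Real.sign x

theorem Real.measurable_sign : Measurable Real.sign :=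
  Measurable.ite measurableSet_Iio measurable_const
    (Measurable.ite measurableSet_Ioi measurable_const measurable_const)

theorem Real.sign_mul_of_pos {c : ℝ} (hc : 0 < c) (x : ℝ) : Real.sign (c * x) = Real.sign x := by
  rcases lt_trichotomy x 0 with hx | rfl | hx
  · rw [Real.sign_of_neg hx, Real.sign_of_neg (mul_neg_of_pos_of_neg hc hx)]
  · rw [mul_zero]
  · rw [Real.sign_of_pos hx, Real.sign_of_pos (mul_pos hc hx)]

theorem Real.abs_mul_sign (x : ℝ) : |x| * Real.sign x = x := by
  rcases lt_trichotomy x 0 with hx | rfl | hx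
  · rw [abs_of_neg hx, Real.sign_of_neg hx, neg_mul_neg, mul_one]
  · rw [Real.sign_zero, mul_zero]
  · rw [abs_of_pos hx, Real.sign_of_pos hx, mul_one]

theorem measurable_catoniPsi : Measurable catoniPsi :=
  (measurable_id.abs.min measurable_const).mul Real.measurable_sign

theorem catoniPsi_neg (x : ℝ) : catoniPsi (-x) = -catoniPsi x := by
  simp only [catoniPsi, abs_neg, Real.sign_neg, mul_neg]

theorem catoniPsi_of_abs_le_one {x : ℝ} (hx : |x| ≤ 1) : catoniPsi x = x := by
  rw [catoniPsi, min_eq_left hx, Real.abs_mul_sign]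

theorem exp_catoniPsi_le (x : ℝ) : Real.exp (catoniPsi x) ≤ 1 + x + x ^ 2 := by
  rcases le_or_gt |x| 1 with hx | hx
  · rw [catoniPsi_of_abs_le_one hx]
    linarith [(abs_le.1 (Real.abs_exp_sub_one_sub_id_le hx)).2]
  rw [catoniPsi, min_eq_right hx.le, one_mul]
  rcases lt_abs.1 hx with hx | hx
  · rw [Real.sign_of_pos (by linarith)]
    nlinarith [Real.exp_one_lt_d9]
  · rw [Real.sign_of_neg (by linarith)]
    nlinarith [Real.exp_le_one_iff.2 (show (-1 : ℝ) ≤ 0 by norm_num)]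

theorem min_mul_abs_mul_sign_div_eq_catoniPsi {w τ : ℝ} (hw : 0 ≤ w) (hτ : 0 < τ) (u : ℝ) :
    min (w * |u|) τ * Real.sign u / τ = catoniPsi (w / τ * u) := by
  rcases hw.eq_or_lt with rfl | hw
  · simp [catoniPsi, hτ.le]
  have hc : 0 < w / τ := div_pos hw hτ
  rw [catoniPsi, Real.sign_mul_of_pos hc, abs_mul, abs_of_pos hc, div_mul_eq_mul_div,
    ← div_self hτ.ne', min_div_div_right hτ.le, div_mul_eq_mul_div]

section Moments

variable {Ω : Type*} [MeasurableSpace Ω] {μ : Measure Ω}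

theorem integral_sub_sq_eq [IsProbabilityMeasure μ] {V : Ω → ℝ} (hV : MemLp V 2 μ) (a : ℝ) :
    ∫ ω, (V ω - a) ^ 2 ∂μ = ∫ ω, (V ω - ∫ ω', V ω' ∂μ) ^ 2 ∂μ + (∫ ω, V ω ∂μ - a) ^ 2 := by
  have h := variance_eq_sub (X := fun ω => V ω - a) (hV.sub (memLp_const a))
  rw [variance_sub_const hV.aestronglyMeasurable,
    variance_eq_integral hV.aestronglyMeasurable.aemeasurable,
    integral_sub (hV.integrable one_le_two) (integrable_const a)] at h
  simp only [Pi.pow_apply, integral_const, probReal_univ, one_smul] at h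
  linarith

theorem integral_exp_catoniPsi_le [IsProbabilityMeasure μ] {Y : Ω → ℝ} (hY : MemLp Y 2 μ) :
    ∫ ω, Real.exp (catoniPsi (Y ω)) ∂μ ≤ Real.exp (∫ ω, Y ω ∂μ + ∫ ω, Y ω ^ 2 ∂μ) := by
  have hY1 := hY.integrable one_le_two
  calc ∫ ω, Real.exp (catoniPsi (Y ω)) ∂μ ≤ ∫ ω, (1 + Y ω + Y ω ^ 2) ∂μ :=
        integral_mono_of_nonneg (ae_of_all _ fun _ => (Real.exp_pos _).le)
          (((integrable_const 1).add hY1).add hY.integrable_sq)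
          (ae_of_all _ fun ω => exp_catoniPsi_le (Y ω))
    _ = (∫ ω, Y ω ∂μ + ∫ ω, Y ω ^ 2 ∂μ) + 1 := by
        rw [integral_add (f := fun ω => 1 + Y ω) ((integrable_const 1).add hY1) hY.integrable_sq,
          integral_add (integrable_const 1) hY1, integral_const, probReal_univ, one_smul]
        ring
    _ ≤ Real.exp (∫ ω, Y ω ∂μ + ∫ ω, Y ω ^ 2 ∂μ) := Real.add_one_le_exp _

theorem integral_exp_sum_catoniPsi_le [IsProbabilityMeasure μ] {ι : Type*} [Fintype ι]
    {Y : ι → Ω → ℝ} (hindep : iIndepFun Y μ) (hY : ∀ i, MemLp (Y i) 2 μ) :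
    ∫ ω, Real.exp (∑ i, catoniPsi (Y i ω)) ∂μ
      ≤ Real.exp (∑ i, (∫ ω, Y i ω ∂μ + ∫ ω, Y i ω ^ 2 ∂μ)) := by
  simp_rw [Real.exp_sum]
  rw [hindep.integral_fun_prod_comp (fun i => (hY i).aestronglyMeasurable.aemeasurable)
    (f := fun _ x => Real.exp (catoniPsi x))
    (fun _ => (Real.measurable_exp.comp measurable_catoniPsi).aestronglyMeasurable)]
  exact prod_le_prod (fun _ _ => integral_nonneg fun _ => (Real.exp_pos _).le)
    fun i _ => integral_exp_catoniPsi_le (hY i)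

theorem integral_exp_weighted_huber_score_le [IsProbabilityMeasure μ] {ι : Type*} [Fintype ι]
    {V : ι → Ω → ℝ} (hindep : iIndepFun V μ) (hV : ∀ i, MemLp (V i) 2 μ)
    {w : ι → ℝ} (hw : ∀ i, 0 ≤ w i) {τ : ℝ} (hτ : 0 < τ) (θ : ℝ) {ε : ℝ} (hε : ε = 1 ∨ ε = -1) :
    ∫ ω, Real.exp (ε * (∑ i, min (w i * |V i ω - θ|) τ * Real.sign (V i ω - θ)) / τ) ∂μ
      ≤ Real.exp (∑ i, (ε * (w i * (∫ ω, V i ω ∂μ - θ)) / τ +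
          w i ^ 2 * (∫ ω, (V i ω - ∫ ω', V i ω' ∂μ) ^ 2 ∂μ + (∫ ω, V i ω ∂μ - θ) ^ 2) /
            τ ^ 2)) := by
  set Y : ι → Ω → ℝ := fun i ω => ε * (w i / τ * (V i ω - θ)) with hY
  have hscore : ∀ ω, ε * (∑ i, min (w i * |V i ω - θ|) τ * Real.sign (V i ω - θ)) / τ
      = ∑ i, catoniPsi (Y i ω) := by
    intro ω
    rw [mul_sum, sum_div]
    refine sum_congr rfl fun i _ => ?_
    rw [mul_div_assoc, min_mul_abs_mul_sign_div_eq_catoniPsi (hw i) hτ]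
    rcases hε with rfl | rfl
    · simp only [one_mul, hY]
    · simp only [neg_one_mul, hY, catoniPsi_neg]
  have hmean : ∀ i, ∫ ω, Y i ω ∂μ = ε * (w i * (∫ ω, V i ω ∂μ - θ)) / τ := by
    intro i
    rw [integral_const_mul, integral_const_mul,
      integral_sub ((hV i).integrable one_le_two) (integrable_const θ)]
    simp only [integral_const, probReal_univ, one_smul]
    ring
  have hsecond : ∀ i, ∫ ω, Y i ω ^ 2 ∂μ
      = w i ^ 2 * (∫ ω, (V i ω - ∫ ω', V i ω' ∂μ) ^ 2 ∂μ + (∫ ω, V i ω ∂μ - θ) ^ 2) / τ ^ 2 := by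
    have hε2 : ε ^ 2 = 1 := by rcases hε with rfl | rfl <;> norm_num
    intro i
    simp_rw [hY, mul_pow, hε2, one_mul]
    rw [integral_const_mul, integral_sub_sq_eq (hV i)]
    ring
  simp only [hscore, ← hmean, ← hsecond]
  exact integral_exp_sum_catoniPsi_le
    (hindep.comp (fun i x => ε * (w i / τ * (x - θ))) fun _ => by fun_prop)
    fun i => (((hV i).sub (memLp_const θ)).const_mul _).const_mul ε

end Moments

/-- MGF bound for the weighted Huber score (proof of Theorem 1): for independent
`X₀, …, X_m` with `E Xᵢ² = σᵢ²`, `E (Xᵢ² − σᵢ²)² = κᵢ`, nonnegative weights `wᵢ` and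
`τ > 0`, the score `r(θ) = Σᵢ min(wᵢ|Xᵢ² − θ|, τ) sgn(Xᵢ² − θ)` satisfies
`E exp(±r(θ)/τ) ≤ exp(Σᵢ [±wᵢ(σᵢ² − θ)/τ + wᵢ²(κᵢ + (σᵢ² − θ)²)/τ²])`. -/
theorem weighted_huber_score_mgf_bound
    {Ω : Type*} [MeasurableSpace Ω] (μ : Measure Ω) [IsProbabilityMeasure μ]
    (m : ℕ) (X : Fin (m + 1) → Ω → ℝ) (σ κ : Fin (m + 1) → ℝ)
    (hXmeas : ∀ i, Measurable (X i))
    (hindep : iIndepFun X μ)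
    (hvar : ∀ i, ∫ ω, (X i ω) ^ 2 ∂μ = (σ i) ^ 2)
    (hκ : ∀ i, ∫ ω, ((X i ω) ^ 2 - (σ i) ^ 2) ^ 2 ∂μ = κ i)
    (hκfin : ∀ i, Integrable (fun ω => (X i ω) ^ 4) μ)
    (w : Fin (m + 1) → ℝ) (hw : ∀ i, 0 ≤ w i)
    (τ : ℝ) (hτ : 0 < τ) (θ : ℝ) :
    (∫ ω, Real.exp ((∑ i, min (w i * |(X i ω) ^ 2 - θ|) τ *
          Real.sign ((X i ω) ^ 2 - θ)) / τ) ∂μ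
      ≤ Real.exp (∑ i, (w i * ((σ i) ^ 2 - θ) / τ +
          (w i) ^ 2 * (κ i + ((σ i) ^ 2 - θ) ^ 2) / τ ^ 2))) ∧
    (∫ ω, Real.exp (-(∑ i, min (w i * |(X i ω) ^ 2 - θ|) τ *
          Real.sign ((X i ω) ^ 2 - θ)) / τ) ∂μ
      ≤ Real.exp (∑ i, (-(w i * ((σ i) ^ 2 - θ)) / τ +
          (w i) ^ 2 * (κ i + ((σ i) ^ 2 - θ) ^ 2) / τ ^ 2))) := by
  have hV : ∀ i, MemLp (fun ω => X i ω ^ 2) 2 μ := fun i =>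
    (memLp_two_iff_integrable_sq ((hXmeas i).pow_const 2).aestronglyMeasurable).2
      (by simpa only [← pow_mul] using hκfin i)
  have hVindep : iIndepFun (fun i ω => X i ω ^ 2) μ :=
    hindep.comp (fun _ x => x ^ 2) fun _ => by fun_prop
  have key := fun ε (hε : ε = 1 ∨ ε = -1) =>
    integral_exp_weighted_huber_score_le hVindep hV hw hτ θ hε
  simp only [hvar, hκ] at key
  exact ⟨by simpa only [one_mul] using key 1 (Or.inl rfl),
    by simpa only [neg_one_mul] using key (-1) (Or.inr rfl)⟩
end

section
/- Let σ² > 0, m > 0, and define the quasi-likelihood loss QL(a, b) = a/b − log(a/b) − 1 for a, b > 0. Take the deterministic predictors h₁ = σ² and h₂ = m σ², and let σ̂² be a positive random variable. Then η := QL(σ², h₂) − QL(σ², h₁) = 1/m − log(1/m) − 1 ≥ 0, and almost surely QL(σ̂², h₂) − QL(σ̂², h₁) − η = (σ̂²/σ² − 1)(1/m − 1); consequently, for any ε > 0, P( QL(σ̂², h₂) − QL(σ̂², h₁) < η − ε ) = P( (σ̂²/σ² − 1)(1/m − 1) < −ε ). -/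
open MeasureTheory

/-- Reversal-probability identity for the QL loss (Section 2.3): with `h₁ = σ²`
and `h₂ = mσ²`, `η = 1/m − log(1/m) − 1 ≥ 0`, pointwise
`QL(σ̂², h₂) − QL(σ̂², h₁) − η = (σ̂²/σ² − 1)(1/m − 1)`, and the probability of
reversing the rank by `ε` equals `P((σ̂²/σ² − 1)(1/m − 1) < −ε)`. -/
theorem ql_reversal_identity
    {Ω : Type*} [MeasurableSpace Ω] (μ : Measure Ω) [IsProbabilityMeasure μ]
    (σsq m : ℝ) (hσ : 0 < σsq) (hm : 0 < m)
    (σhat : Ω → ℝ) (hσhat : ∀ ω, 0 < σhat ω)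
    (QL : ℝ → ℝ → ℝ) (hQL : ∀ a b : ℝ, QL a b = a / b - Real.log (a / b) - 1)
    (η : ℝ) (hη : η = QL σsq (m * σsq) - QL σsq σsq) :
    (η = 1 / m - Real.log (1 / m) - 1) ∧ (0 ≤ η) ∧
    (∀ ω : Ω, QL (σhat ω) (m * σsq) - QL (σhat ω) σsq - η
      = (σhat ω / σsq - 1) * (1 / m - 1)) ∧
    (∀ ε : ℝ, 0 < ε →
      μ {ω | QL (σhat ω) (m * σsq) - QL (σhat ω) σsq < η - ε}
        = μ {ω | (σhat ω / σsq - 1) * (1 / m - 1) < -ε}) := by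

  have hσne : σsq ≠ 0 := ne_of_gt hσ
  have hmne : m ≠ 0 := ne_of_gt hm
  have hηval : η = 1 / m - Real.log (1 / m) - 1 := by
    rw [hη, hQL, hQL]
    have h1 : σsq / (m * σsq) = 1 / m := by field_simp
    have h2 : σsq / σsq = 1 := div_self hσne
    rw [h1, h2, Real.log_one]
    ring
  have hηnn : 0 ≤ η := by
    rw [hηval]
    have h := Real.log_le_sub_one_of_pos (x := 1 / m) (by positivity)
    linarith
  have hpt : ∀ ω : Ω, QL (σhat ω) (m * σsq) - QL (σhat ω) σsq - η
      = (σhat ω / σsq - 1) * (1 / m - 1) := by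
    intro ω
    rw [hQL, hQL, hηval]
    have hx : 0 < σhat ω / σsq := div_pos (hσhat ω) hσ
    have h1 : σhat ω / (m * σsq) = (σhat ω / σsq) * (1 / m) := by rw [div_mul_div_comm, mul_one, mul_comm σsq m]
    have h2 : Real.log (σhat ω / (m * σsq)) = Real.log (σhat ω / σsq) + Real.log (1 / m) := by
      rw [h1, Real.log_mul (ne_of_gt hx) (by positivity)]
    rw [h2, h1]
    ring
  refine ⟨hηval, hηnn, hpt, fun ε hε => ?_⟩
  congr 1
  ext ω
  simp only [Set.mem_setOf_eq]
  have := hpt ω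
  constructor <;> intro h <;> linarith
end

section
/- Under the forward setting, let c > 0 and define the clipped weighted mean σ̂² = Σ_{s=t}^{t+m} w_{s,t} · min( X_s², c / w_{s,t} ). Then | E[σ̂²] − σ_t² − δ_{0,t} | ≤ 2 Σ_{s=t}^{t+m} w_{s,t}² κ̃_s / c = 2 κ̃†_t / ( n†_eff · c ); in particular E[σ̂²] ≤ σ_t² + δ_{0,t} and E[σ̂²] ≥ σ_t² + δ_{0,t} − 2 κ̃†_t / ( n†_eff · c ). -/
/-!
Clipping only lowers each term, so `E σ̂² ≤ Σₛ wₛ σₛ² = σₜ² + δ₀ₜ`. Conversely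
`y - min y a ≤ y² / a` for `y ≥ 0`; with `y = Xₛ²` and `a = c / wₛ` the clipped term loses
at most `wₛ κ̃ₛ / c` in expectation, so after weighting the total deficit is at most
`Σₛ wₛ² κ̃ₛ / c`, half the stated bound.
-/

open MeasureTheory ProbabilityTheory Finset

lemma sub_min_le_sq_div {y a : ℝ} (hy : 0 ≤ y) (ha : 0 < a) : y - min y a ≤ y ^ 2 / a := by
  rcases le_total y a with h | h
  · rw [min_eq_left h, sub_self]
    positivity
  · rw [min_eq_right h, le_div_iff₀ ha]
    nlinarith

section Truncation

variable {Ω : Type*} [MeasurableSpace Ω] {μ : Measure Ω} [IsFiniteMeasure μ]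

lemma integrable_sq_of_integrable_pow_four {X : Ω → ℝ} (hX : AEStronglyMeasurable X μ)
    (h4 : Integrable (fun ω => X ω ^ 4) μ) : Integrable (fun ω => X ω ^ 2) μ := by
  refine ((integrable_const 1).add h4).mono' (hX.pow 2) (ae_of_all _ fun ω => ?_)
  rw [Real.norm_eq_abs, abs_of_nonneg (sq_nonneg _), Pi.add_apply]
  nlinarith [sq_nonneg (X ω ^ 2 - 1)]

variable {Y : Ω → ℝ} {a : ℝ}

lemma MeasureTheory.Integrable.min_const (hY : Integrable Y μ) (a : ℝ) :
    Integrable (fun ω => min (Y ω) a) μ :=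
  hY.inf (integrable_const a)

lemma integral_min_const_le (hY : Integrable Y μ) : ∫ ω, min (Y ω) a ∂μ ≤ ∫ ω, Y ω ∂μ :=
  integral_mono (hY.min_const a) hY fun _ => min_le_left _ _

lemma integral_sub_integral_min_const_le (hY0 : 0 ≤ Y) (hY : Integrable Y μ)
    (hY2 : Integrable (fun ω => Y ω ^ 2) μ) (ha : 0 < a) :
    ∫ ω, Y ω ∂μ - ∫ ω, min (Y ω) a ∂μ ≤ (∫ ω, Y ω ^ 2 ∂μ) / a := by
  rw [← integral_sub hY (hY.min_const a), ← integral_div]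
  exact integral_mono (hY.sub (hY.min_const a)) (hY2.div_const a)
    fun ω => sub_min_le_sq_div (hY0 ω) ha

lemma integral_weighted_sum_min_mem_Icc {ι : Type*} (s : Finset ι) {w : ι → ℝ}
    (hw : ∀ i ∈ s, 0 < w i) {Y : ι → Ω → ℝ} (hY0 : ∀ i, 0 ≤ Y i)
    (hY : ∀ i, Integrable (Y i) μ) (hY2 : ∀ i, Integrable (fun ω => Y i ω ^ 2) μ)
    {c : ℝ} (hc : 0 < c) :
    ∫ ω, ∑ i ∈ s, w i * min (Y i ω) (c / w i) ∂μ ∈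
      Set.Icc (∑ i ∈ s, w i * ∫ ω, Y i ω ∂μ - (∑ i ∈ s, w i ^ 2 * ∫ ω, Y i ω ^ 2 ∂μ) / c)
        (∑ i ∈ s, w i * ∫ ω, Y i ω ∂μ) := by
  rw [integral_finsetSum _ fun i _ => ((hY i).min_const _).const_mul (w i)]
  simp only [integral_const_mul]
  constructor
  · rw [sub_le_iff_le_add, ← sub_le_iff_le_add', sum_div, ← sum_sub_distrib]
    refine sum_le_sum fun i hi => ?_
    have hbias := integral_sub_integral_min_const_le (hY0 i) (hY i) (hY2 i) (div_pos hc (hw i hi))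
    calc w i * ∫ ω, Y i ω ∂μ - w i * ∫ ω, min (Y i ω) (c / w i) ∂μ
        = w i * (∫ ω, Y i ω ∂μ - ∫ ω, min (Y i ω) (c / w i) ∂μ) := by ring
      _ ≤ w i * ((∫ ω, Y i ω ^ 2 ∂μ) / (c / w i)) := by gcongr; exact (hw i hi).le
      _ = w i ^ 2 * (∫ ω, Y i ω ^ 2 ∂μ) / c := by field_simp [(hw i hi).ne']
  · exact sum_le_sum fun i hi =>
      mul_le_mul_of_nonneg_left (integral_min_const_le (hY i)) (hw i hi).le

end Truncation

theorem clipped_weighted_mean_bias_general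
    {Ω : Type*} [MeasurableSpace Ω] (μ : Measure Ω) [IsProbabilityMeasure μ]
    (X : ℤ → Ω → ℝ) (σ κt : ℤ → ℝ)
    (hXmeas : ∀ s, Measurable (X s))
    (hvar : ∀ s, ∫ ω, (X s ω) ^ 2 ∂μ = (σ s) ^ 2)
    (hκt : ∀ s, ∫ ω, (X s ω) ^ 4 ∂μ = κt s)
    (hX4int : ∀ s, Integrable (fun ω => (X s ω) ^ 4) μ)
    (t : ℤ) (m : ℕ) (lam : ℝ) (hlam : lam ∈ Set.Ioo (0 : ℝ) 1)
    (w : ℕ → ℝ) (hw : ∀ i, w i = lam ^ i / ∑ j ∈ Finset.range (m + 1), lam ^ j)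
    (neff κtdag δ0 : ℝ)
    (hneff : neff = 1 / ∑ i ∈ Finset.range (m + 1), (w i) ^ 2)
    (hκtdag : κtdag = (∑ i ∈ Finset.range (m + 1), (w i) ^ 2 * κt (t + i)) /
      ∑ i ∈ Finset.range (m + 1), (w i) ^ 2)
    (hδ0 : δ0 = (∑ i ∈ Finset.range (m + 1), w i * (σ (t + i)) ^ 2) - (σ t) ^ 2)
    (c : ℝ) (hc : 0 < c) :
    (2 * (∑ i ∈ Finset.range (m + 1), (w i) ^ 2 * κt (t + i)) / c = 2 * κtdag / (neff * c)) ∧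
    (|(∫ ω, ∑ i ∈ Finset.range (m + 1), w i * min ((X (t + i) ω) ^ 2) (c / w i) ∂μ)
        - (σ t) ^ 2 - δ0|
      ≤ 2 * (∑ i ∈ Finset.range (m + 1), (w i) ^ 2 * κt (t + i)) / c) ∧
    ((∫ ω, ∑ i ∈ Finset.range (m + 1), w i * min ((X (t + i) ω) ^ 2) (c / w i) ∂μ)
      ≤ (σ t) ^ 2 + δ0) ∧
    ((σ t) ^ 2 + δ0 - 2 * κtdag / (neff * c)
      ≤ ∫ ω, ∑ i ∈ Finset.range (m + 1), w i * min ((X (t + i) ω) ^ 2) (c / w i) ∂μ) := by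
  have hwpos : ∀ i, 0 < w i := fun i => by
    rw [hw]
    exact div_pos (pow_pos hlam.1 i) (sum_pos (fun j _ => pow_pos hlam.1 j) nonempty_range_add_one)
  have hsq_pos : 0 < ∑ i ∈ range (m + 1), w i ^ 2 :=
    sum_pos (fun i _ => pow_pos (hwpos i) 2) nonempty_range_add_one
  have hidentity : 2 * (∑ i ∈ range (m + 1), w i ^ 2 * κt (t + i)) / c
      = 2 * κtdag / (neff * c) := by
    rw [hκtdag, hneff]
    field_simp
  have hS : 0 ≤ (∑ i ∈ range (m + 1), w i ^ 2 * κt (t + i)) / c :=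
    div_nonneg (sum_nonneg fun i _ => mul_nonneg (sq_nonneg _) (hκt _ ▸ integral_nonneg
      fun ω => by positivity)) hc.le
  have hbounds := integral_weighted_sum_min_mem_Icc (μ := μ) (range (m + 1)) (fun i _ => hwpos i)
    (fun i ω => sq_nonneg (X (t + i) ω))
    (fun i => integrable_sq_of_integrable_pow_four (hXmeas _).aestronglyMeasurable (hX4int _))
    (fun i => by simpa only [← pow_mul] using hX4int (t + i)) hc
  simp only [hvar, ← pow_mul, hκt] at hbounds
  have hT : σ t ^ 2 + δ0 = ∑ i ∈ range (m + 1), w i * σ (t + i) ^ 2 := by rw [hδ0]; ring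
  rw [hT, ← hidentity, abs_le, mul_div_assoc]
  exact ⟨rfl, ⟨by linarith [hbounds.1], by linarith [hbounds.2]⟩, hbounds.2,
    by linarith [hbounds.1]⟩

/-- Bias bound for the clipped weighted mean proxy (proof of Theorem 4):
`|E σ̂² − σₜ² − δ₀ₜ| ≤ 2 Σₛ w²ₛ κ̃ₛ / c = 2κ̃†ₜ/(n† c)`; in particular
`E σ̂² ≤ σₜ² + δ₀ₜ` and `E σ̂² ≥ σₜ² + δ₀ₜ − 2κ̃†ₜ/(n† c)`. -/
theorem clipped_weighted_mean_bias
    {Ω : Type*} [MeasurableSpace Ω] (μ : Measure Ω) [IsProbabilityMeasure μ]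
    (X : ℤ → Ω → ℝ) (σ κ κt : ℤ → ℝ)
    (hXmeas : ∀ s, Measurable (X s))
    (hindep : iIndepFun X μ)
    (hmean : ∀ s, ∫ ω, X s ω ∂μ = 0)
    (hvar : ∀ s, ∫ ω, (X s ω) ^ 2 ∂μ = (σ s) ^ 2)
    (hσpos : ∀ s, 0 < σ s)
    (hκ : ∀ s, ∫ ω, ((X s ω) ^ 2 - (σ s) ^ 2) ^ 2 ∂μ = κ s)
    (hκt : ∀ s, ∫ ω, (X s ω) ^ 4 ∂μ = κt s)
    (hX4int : ∀ s, Integrable (fun ω => (X s ω) ^ 4) μ)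
    (t : ℤ) (m : ℕ) (lam : ℝ) (hlam : lam ∈ Set.Ioo (0 : ℝ) 1)
    (w : ℕ → ℝ) (hw : ∀ i, w i = lam ^ i / ∑ j ∈ Finset.range (m + 1), lam ^ j)
    (neff κtdag δ0 : ℝ)
    (hneff : neff = 1 / ∑ i ∈ Finset.range (m + 1), (w i) ^ 2)
    (hκtdag : κtdag = (∑ i ∈ Finset.range (m + 1), (w i) ^ 2 * κt (t + i)) /
      ∑ i ∈ Finset.range (m + 1), (w i) ^ 2)
    (hδ0 : δ0 = (∑ i ∈ Finset.range (m + 1), w i * (σ (t + i)) ^ 2) - (σ t) ^ 2)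
    (c : ℝ) (hc : 0 < c) :
    (2 * (∑ i ∈ Finset.range (m + 1), (w i) ^ 2 * κt (t + i)) / c = 2 * κtdag / (neff * c)) ∧
    (|(∫ ω, ∑ i ∈ Finset.range (m + 1), w i * min ((X (t + i) ω) ^ 2) (c / w i) ∂μ)
        - (σ t) ^ 2 - δ0|
      ≤ 2 * (∑ i ∈ Finset.range (m + 1), (w i) ^ 2 * κt (t + i)) / c) ∧
    ((∫ ω, ∑ i ∈ Finset.range (m + 1), w i * min ((X (t + i) ω) ^ 2) (c / w i) ∂μ)
      ≤ (σ t) ^ 2 + δ0) ∧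
    ((σ t) ^ 2 + δ0 - 2 * κtdag / (neff * c)
      ≤ ∫ ω, ∑ i ∈ Finset.range (m + 1), w i * min ((X (t + i) ω) ^ 2) (c / w i) ∂μ) :=
  clipped_weighted_mean_bias_general μ X σ κt hXmeas hvar hκt hX4int t m lam hlam w hw neff κtdag δ0
    hneff hκtdag hδ0 c hc
end
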